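/- arXiv:0906.1086 — 5 statements merged into one kernel-verified Lean document; each statement's English description precedes it below -/
import Mathlib

section
/- Let G be a bridgeless cubic graph. Then G has a Fulkerson covering if and only if G has two compatible FR-triples. -/
open SimpleGraph

variable {V : Type*}

/-- Two edges (as unordered pairs) are disjoint: they share no vertex. -/
def Sym2Disjoint {V : Type*} (e f : Sym2 V) : Prop := ∀ v : V, v ∈ e → v ∉ f

/-- A matching of `G`, given as a set of edges of `G` which are pairwise disjoint. -/
def IsMatchingSet (G : SimpleGraph V) (M : Set (Sym2 V)) : Prop :=
  M ⊆ G.edgeSet ∧ M.Pairwise Sym2Disjoint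

/-- A perfect matching of `G`: a matching covering every vertex. -/
def IsPerfectMatchingSet (G : SimpleGraph V) (M : Set (Sym2 V)) : Prop :=
  IsMatchingSet G M ∧ ∀ v : V, ∃ e ∈ M, v ∈ e

/-- A cubic (3-regular) graph. -/
def IsCubic (G : SimpleGraph V) : Prop := ∀ v : V, (G.neighborSet v).ncard = 3

/-- A bridgeless graph. -/
def Bridgeless (G : SimpleGraph V) : Prop := ∀ e : Sym2 V, ¬ G.IsBridge e

/-- A Fulkerson covering: six perfect matchings such that every edge of `G`
lies in exactly two of them (counted with multiplicity in the list). -/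
def IsFulkersonCovering (G : SimpleGraph V) (M : Fin 6 → Set (Sym2 V)) : Prop :=
  (∀ i, IsPerfectMatchingSet G (M i)) ∧
  ∀ e ∈ G.edgeSet, ({i : Fin 6 | e ∈ M i} : Set (Fin 6)).ncard = 2

/-- An FR-triple: three perfect matchings with empty intersection. -/
def IsFRTriple (G : SimpleGraph V) (M1 M2 M3 : Set (Sym2 V)) : Prop :=
  IsPerfectMatchingSet G M1 ∧ IsPerfectMatchingSet G M2 ∧ IsPerfectMatchingSet G M3 ∧
  M1 ∩ M2 ∩ M3 = ∅

/-- `tSet G M1 M2 M3 k` is the set `T_k` of edges of `G` lying in exactly `k`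
of the three matchings (counted with multiplicity). -/
def tSet (G : SimpleGraph V) (M1 M2 M3 : Set (Sym2 V)) (k : ℕ) : Set (Sym2 V) :=
  {e ∈ G.edgeSet | ({i : Fin 3 | e ∈ ![M1, M2, M3] i} : Set (Fin 3)).ncard = k}

/-- Two FR-triples are compatible when `T_0 = T'_2` and `T_2 = T'_0`. -/
def CompatibleFR (G : SimpleGraph V) (M1 M2 M3 N1 N2 N3 : Set (Sym2 V)) : Prop :=
  tSet G M1 M2 M3 0 = tSet G N1 N2 N3 2 ∧ tSet G M1 M2 M3 2 = tSet G N1 N2 N3 0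

/-!
Split the six matchings of a Fulkerson covering into two triples. An edge lying in exactly two
of the six lies in at most two matchings of each triple, so both triples are FR-triples, and
its multiplicities in the two triples sum to `2`, i.e. they are `(0,2)`, `(1,1)` or `(2,0)`:
this is compatibility. Conversely, for two FR-triples every multiplicity is `0`, `1` or `2`,
and compatibility forces the two multiplicities of each edge to sum to `2`.
-/

section Multiplicity

variable {α : Type*}

noncomputable def tripleMultiplicity (A B C : Set α) (a : α) : ℕ :=
  ({i : Fin 3 | a ∈ ![A, B, C] i} : Set (Fin 3)).ncard

theorem ncard_setOf_eq_sum_ite {ι : Type*} [Fintype ι] (p : ι → Prop) [DecidablePred p] :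
    {i | p i}.ncard = ∑ i, if p i then 1 else 0 := by
  rw [Set.ncard_eq_toFinset_card', ← Finset.card_filter]
  congr
  ext
  simp

open Classical in
theorem tripleMultiplicity_eq (A B C : Set α) (a : α) :
    tripleMultiplicity A B C a =
      (if a ∈ A then 1 else 0) + (if a ∈ B then 1 else 0) + (if a ∈ C then 1 else 0) := by
  rw [tripleMultiplicity, ncard_setOf_eq_sum_ite, Fin.sum_univ_three]
  rfl

theorem tripleMultiplicity_eq_three_iff {A B C : Set α} {a : α} :
    tripleMultiplicity A B C a = 3 ↔ a ∈ A ∩ B ∩ C := by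
  classical
  rw [tripleMultiplicity_eq]
  by_cases hA : a ∈ A <;> by_cases hB : a ∈ B <;> by_cases hC : a ∈ C <;> simp [hA, hB, hC]

theorem inter_inter_eq_empty_of_tripleMultiplicity_le_two {A B C S : Set α} (hA : A ⊆ S)
    (h : ∀ a ∈ S, tripleMultiplicity A B C a ≤ 2) : A ∩ B ∩ C = ∅ := by
  refine Set.eq_empty_of_forall_notMem fun a ha => ?_
  have := h a (hA ha.1.1)
  rw [tripleMultiplicity_eq_three_iff.2 ha] at this
  omega

theorem tripleMultiplicity_le_two {A B C : Set α} (h : A ∩ B ∩ C = ∅) (a : α) :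
    tripleMultiplicity A B C a ≤ 2 := by
  have hle : tripleMultiplicity A B C a ≤ 3 := by
    classical
    rw [tripleMultiplicity_eq]
    split_ifs <;> omega
  have hne : tripleMultiplicity A B C a ≠ 3 := fun h3 =>
    (h ▸ tripleMultiplicity_eq_three_iff.1 h3 : a ∈ (∅ : Set α))
  omega

theorem ncard_setOf_mem_fin_six (M : Fin 6 → Set α) (a : α) :
    {i | a ∈ M i}.ncard =
      tripleMultiplicity (M 0) (M 1) (M 2) a + tripleMultiplicity (M 3) (M 4) (M 5) a := by
  classical
  rw [ncard_setOf_eq_sum_ite, Fin.sum_univ_six, tripleMultiplicity_eq, tripleMultiplicity_eq]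
  ring

end Multiplicity

section Compatible

variable {G : SimpleGraph V} {M1 M2 M3 N1 N2 N3 : Set (Sym2 V)}

theorem mem_tSet {e : Sym2 V} {k : ℕ} :
    e ∈ tSet G M1 M2 M3 k ↔ e ∈ G.edgeSet ∧ tripleMultiplicity M1 M2 M3 e = k :=
  Iff.rfl

theorem compatibleFR_of_forall_add_eq_two
    (h : ∀ e ∈ G.edgeSet,
      tripleMultiplicity M1 M2 M3 e + tripleMultiplicity N1 N2 N3 e = 2) :
    CompatibleFR G M1 M2 M3 N1 N2 N3 := by
  constructor <;> ext e <;> simp only [mem_tSet] <;>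
    exact and_congr_right fun he => by have := h e he; omega

theorem CompatibleFR.add_eq_two (hc : CompatibleFR G M1 M2 M3 N1 N2 N3)
    (hM : M1 ∩ M2 ∩ M3 = ∅) (hN : N1 ∩ N2 ∩ N3 = ∅) {e : Sym2 V} (he : e ∈ G.edgeSet) :
    tripleMultiplicity M1 M2 M3 e + tripleMultiplicity N1 N2 N3 e = 2 := by
  have h02 := Set.ext_iff.1 hc.1 e
  have h20 := Set.ext_iff.1 hc.2 e
  simp only [mem_tSet, he, true_and] at h02 h20
  have := tripleMultiplicity_le_two hM e
  have := tripleMultiplicity_le_two hN e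
  omega

end Compatible

theorem stmt_2_general {V : Type*} (G : SimpleGraph V) :
    (∃ M : Fin 6 → Set (Sym2 V), IsFulkersonCovering G M) ↔
    (∃ M1 M2 M3 N1 N2 N3 : Set (Sym2 V),
      IsFRTriple G M1 M2 M3 ∧ IsFRTriple G N1 N2 N3 ∧
      CompatibleFR G M1 M2 M3 N1 N2 N3) := by
  constructor
  · rintro ⟨M, hM, hcount⟩
    have hsum : ∀ e ∈ G.edgeSet, tripleMultiplicity (M 0) (M 1) (M 2) e +
        tripleMultiplicity (M 3) (M 4) (M 5) e = 2 := fun e he =>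
      ncard_setOf_mem_fin_six M e ▸ hcount e he
    refine ⟨M 0, M 1, M 2, M 3, M 4, M 5, ⟨hM 0, hM 1, hM 2, ?_⟩, ⟨hM 3, hM 4, hM 5, ?_⟩,
      compatibleFR_of_forall_add_eq_two hsum⟩
    · exact inter_inter_eq_empty_of_tripleMultiplicity_le_two (hM 0).1.1 fun e he => by
        have := hsum e he; omega
    · exact inter_inter_eq_empty_of_tripleMultiplicity_le_two (hM 3).1.1 fun e he => by
        have := hsum e he; omega
  · rintro ⟨M1, M2, M3, N1, N2, N3, ⟨hM1, hM2, hM3, hM⟩, ⟨hN1, hN2, hN3, hN⟩, hc⟩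
    refine ⟨![M1, M2, M3, N1, N2, N3], fun i => ?_, fun e he => ?_⟩
    · fin_cases i <;> assumption
    · rw [ncard_setOf_mem_fin_six]
      exact hc.add_eq_two hM hN he

/-- A bridgeless cubic graph has a Fulkerson covering if and only if it
has two compatible FR-triples. -/
theorem stmt_2 {V : Type*} [Fintype V] (G : SimpleGraph V)
    (hcubic : IsCubic G) (hbridgeless : Bridgeless G) :
    (∃ M : Fin 6 → Set (Sym2 V), IsFulkersonCovering G M) ↔
    (∃ M1 M2 M3 N1 N2 N3 : Set (Sym2 V),
      IsFRTriple G M1 M2 M3 ∧ IsFRTriple G N1 N2 N3 ∧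
      CompatibleFR G M1 M2 M3 N1 N2 N3) :=
  stmt_2_general G
end

section
/- Let G be a bridgeless cubic graph together with a perfect matching M and an F-family 𝓜 = {A, B, C, D} for M, and let N be a set of edges consisting, for each cycle of G∖M incident with 𝓜, of two disjoint edges of G covering its four determined vertices. Then M' = (M ∖ (A ∪ B ∪ C ∪ D)) ∪ N is a perfect matching of G. -/
open SimpleGraph

variable {V : Type*}

/-- `S` is (the vertex set of) a cycle of `G∖M`: a connected component of the graph
obtained from `G` by deleting the edges of `M` (for `M` a perfect matching of a cubic
graph `G`, these components are exactly the cycles of `G∖M`). -/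
def IsCycleOf (G : SimpleGraph V) (M : Set (Sym2 V)) (S : Set V) : Prop :=
  ∃ c : (G.deleteEdges M).ConnectedComponent, S = c.supp

/-- The edges of the cycle of `G∖M` with vertex set `S`: edges of `G` not in `M`
with both endpoints in `S`. -/
def cycleEdges (G : SimpleGraph V) (M : Set (Sym2 V)) (S : Set V) : Set (Sym2 V) :=
  {e | e ∈ G.edgeSet ∧ e ∉ M ∧ ∀ v ∈ e, v ∈ S}

/-- The vertices of `S` incident with an edge of `X`. -/
def incVerts (S : Set V) (X : Set (Sym2 V)) : Set V :=
  {v | v ∈ S ∧ ∃ e ∈ X, v ∈ e}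

/-- `A` is an `M`-balanced matching: `A = M ∩ M'` for some perfect matching `M'`. -/
def IsBalancedMatching (G : SimpleGraph V) (M A : Set (Sym2 V)) : Prop :=
  ∃ M' : Set (Sym2 V), IsPerfectMatchingSet G M' ∧ A = M ∩ M'

/-- `{A, B, C, D}` is an F-family for the perfect matching `M` of `G`:
four pairwise disjoint `M`-balanced matchings such that
(i) every odd cycle of `G∖M` has, for each member, exactly one vertex incident with an
edge of that member;
(ii) every even cycle of `G∖M` incident with an edge of `A ∪ B ∪ C ∪ D` contains exactly
four vertices incident with edges of `A ∪ B ∪ C ∪ D`, and these four are incident to a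
single member, or two of them are incident to one member and the other two to another
single member;
(iii) for each cycle of `G∖M` the four vertices so determined are covered by two
disjoint edges of `G` whose endpoints all lie among these four vertices. -/
def IsFFamily (G : SimpleGraph V) (M A B C D : Set (Sym2 V)) : Prop :=
  (∀ X ∈ ({A, B, C, D} : Set (Set (Sym2 V))), IsBalancedMatching G M X) ∧
  [A, B, C, D].Pairwise Disjoint ∧
  (∀ S : Set V, IsCycleOf G M S → Odd S.ncard →
    ∀ X ∈ ({A, B, C, D} : Set (Set (Sym2 V))), (incVerts S X).ncard = 1) ∧
  (∀ S : Set V, IsCycleOf G M S → Even S.ncard →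
    (incVerts S (A ∪ B ∪ C ∪ D)).Nonempty →
    (incVerts S (A ∪ B ∪ C ∪ D)).ncard = 4 ∧
    ((∃ X ∈ ({A, B, C, D} : Set (Set (Sym2 V))),
        incVerts S (A ∪ B ∪ C ∪ D) = incVerts S X) ∨
     (∃ X ∈ ({A, B, C, D} : Set (Set (Sym2 V))),
      ∃ Y ∈ ({A, B, C, D} : Set (Set (Sym2 V))), X ≠ Y ∧
        (incVerts S X).ncard = 2 ∧ (incVerts S Y).ncard = 2 ∧
        incVerts S (A ∪ B ∪ C ∪ D) = incVerts S X ∪ incVerts S Y))) ∧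
  (∀ S : Set V, IsCycleOf G M S → (incVerts S (A ∪ B ∪ C ∪ D)).Nonempty →
    ∃ e1 e2 : Sym2 V, e1 ∈ G.edgeSet ∧ e2 ∈ G.edgeSet ∧ e1 ≠ e2 ∧
      Sym2Disjoint e1 e2 ∧
      (∀ v : V, (v ∈ e1 ∨ v ∈ e2) ↔ v ∈ incVerts S (A ∪ B ∪ C ∪ D)))

/-- `N` is a set of edges consisting, for each cycle of `G∖M` incident with the family
`{A, B, C, D}`, of exactly two disjoint edges of `G` covering the four determined
vertices of that cycle (and nothing else). -/
def IsNSet (G : SimpleGraph V) (M A B C D N : Set (Sym2 V)) : Prop :=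
  (∀ e ∈ N, ∃ S : Set V, IsCycleOf G M S ∧
      (incVerts S (A ∪ B ∪ C ∪ D)).Nonempty ∧ ∀ v ∈ e, v ∈ S) ∧
  (∀ S : Set V, IsCycleOf G M S → (incVerts S (A ∪ B ∪ C ∪ D)).Nonempty →
    ∃ e1 e2 : Sym2 V, e1 ∈ G.edgeSet ∧ e2 ∈ G.edgeSet ∧ e1 ≠ e2 ∧
      Sym2Disjoint e1 e2 ∧
      (∀ v : V, (v ∈ e1 ∨ v ∈ e2) ↔ v ∈ incVerts S (A ∪ B ∪ C ∪ D)) ∧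
      {e ∈ N | ∀ v ∈ e, v ∈ S} = {e1, e2})


/-! Every vertex covered by `A ∪ B ∪ C ∪ D ⊆ M` lies on a cycle of `G∖M` incident with the
family, and there its `M`-edge is traded for one of the two `N`-edges covering exactly the four
determined vertices of that cycle. Distinct cycles are disjoint, so the `N`-edges form a matching
covering exactly the vertices that lose their `M`-edge; swapping such a matching into a perfect
matching yields a perfect matching. -/

theorem Sym2Disjoint.symm {e f : Sym2 V} (h : Sym2Disjoint e f) : Sym2Disjoint f e :=
  fun v hvf hve => h v hve hvf

theorem IsBalancedMatching.subset {G : SimpleGraph V} {M X : Set (Sym2 V)}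
    (hX : IsBalancedMatching G M X) : X ⊆ M := by
  obtain ⟨M', -, rfl⟩ := hX
  exact Set.inter_subset_left

theorem IsFFamily.union_subset {G : SimpleGraph V} {M A B C D : Set (Sym2 V)}
    (hFam : IsFFamily G M A B C D) : A ∪ B ∪ C ∪ D ⊆ M := by
  have hbal : ∀ X ∈ ({A, B, C, D} : Set (Set (Sym2 V))), X ⊆ M :=
    fun X hX => (hFam.1 X hX).subset
  simp only [Set.mem_insert_iff, Set.mem_singleton_iff, forall_eq_or_imp, forall_eq] at hbal
  obtain ⟨hA, hB, hC, hD⟩ := hbal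
  exact Set.union_subset (Set.union_subset (Set.union_subset hA hB) hC) hD

theorem IsPerfectMatchingSet.diff_union {G : SimpleGraph V} {M U N : Set (Sym2 V)}
    (hM : IsPerfectMatchingSet G M) (hUM : U ⊆ M) (hN : IsMatchingSet G N)
    (hcov : ∀ v : V, (∃ e ∈ N, v ∈ e) ↔ ∃ e ∈ U, v ∈ e) :
    IsPerfectMatchingSet G ((M \ U) ∪ N) := by
  obtain ⟨⟨hMG, hMdisj⟩, hMcov⟩ := hM
  have hcross : ∀ e ∈ M \ U, ∀ f ∈ N, Sym2Disjoint e f := by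
    rintro e ⟨heM, heU⟩ f hf v hve hvf
    obtain ⟨g, hgU, hvg⟩ := (hcov v).1 ⟨f, hf, hvf⟩
    have hne : e ≠ g := fun h => heU (h ▸ hgU)
    exact hMdisj heM (hUM hgU) hne v hve hvg
  refine ⟨⟨Set.union_subset (Set.sdiff_subset.trans hMG) hN.1, ?_⟩, fun v => ?_⟩
  · rw [Set.pairwise_union]
    exact ⟨hMdisj.mono Set.sdiff_subset, hN.2,
      fun e he f hf _ => ⟨hcross e he f hf, (hcross e he f hf).symm⟩⟩
  · obtain ⟨e, heM, hve⟩ := hMcov v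
    by_cases heU : e ∈ U
    · obtain ⟨f, hfN, hvf⟩ := (hcov v).2 ⟨e, heU, hve⟩
      exact ⟨f, Or.inr hfN, hvf⟩
    · exact ⟨e, Or.inl ⟨heM, heU⟩, hve⟩

section Cycles

variable {G : SimpleGraph V} {M : Set (Sym2 V)}

theorem IsCycleOf.eq_of_mem {S T : Set V} {v : V} (hS : IsCycleOf G M S) (hT : IsCycleOf G M T)
    (hvS : v ∈ S) (hvT : v ∈ T) : S = T := by
  obtain ⟨c, rfl⟩ := hS
  obtain ⟨d, rfl⟩ := hT
  rw [ConnectedComponent.mem_supp_iff] at hvS hvT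
  rw [← hvS, ← hvT]

theorem isCycleOf_supp_connectedComponentMk (v : V) :
    IsCycleOf G M ((G.deleteEdges M).connectedComponentMk v).supp :=
  ⟨_, rfl⟩

end Cycles

namespace IsNSet

variable {G : SimpleGraph V} {M A B C D N : Set (Sym2 V)}

theorem exists_pair (hN : IsNSet G M A B C D N) {S : Set V} (hS : IsCycleOf G M S)
    (hSU : (incVerts S (A ∪ B ∪ C ∪ D)).Nonempty) :
    ∃ e1 e2 : Sym2 V, e1 ∈ G.edgeSet ∧ e2 ∈ G.edgeSet ∧ Sym2Disjoint e1 e2 ∧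
      (∀ v : V, (v ∈ e1 ∨ v ∈ e2) ↔ v ∈ incVerts S (A ∪ B ∪ C ∪ D)) ∧ e1 ∈ N ∧ e2 ∈ N ∧
      ∀ e ∈ N, (∀ v ∈ e, v ∈ S) → e = e1 ∨ e = e2 := by
  obtain ⟨e1, e2, h1, h2, -, hdisj, hcov, hNS⟩ := hN.2 S hS hSU
  have hmem : ∀ e, e ∈ N ∧ (∀ v ∈ e, v ∈ S) ↔ e = e1 ∨ e = e2 := fun e => by
    simpa using Set.ext_iff.1 hNS e
  exact ⟨e1, e2, h1, h2, hdisj, hcov, ((hmem e1).2 (Or.inl rfl)).1,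
    ((hmem e2).2 (Or.inr rfl)).1, fun e he heS => (hmem e).1 ⟨he, heS⟩⟩

theorem mem_edgeSet_and_mem_incVerts (hN : IsNSet G M A B C D N) {e : Sym2 V} (he : e ∈ N) :
    e ∈ G.edgeSet ∧ ∃ S : Set V, IsCycleOf G M S ∧
      ∀ v ∈ e, v ∈ incVerts S (A ∪ B ∪ C ∪ D) := by
  obtain ⟨S, hS, hSU, heS⟩ := hN.1 e he
  obtain ⟨e1, e2, h1, h2, -, hcov, -, -, hpair⟩ := hN.exists_pair hS hSU
  rcases hpair e he heS with rfl | rfl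
  · exact ⟨h1, S, hS, fun v hv => (hcov v).1 (Or.inl hv)⟩
  · exact ⟨h2, S, hS, fun v hv => (hcov v).1 (Or.inr hv)⟩

/-- Two `N`-edges through a common vertex lie on the same cycle of `G∖M`, where `N` has only
two edges, and these are disjoint. -/
theorem pairwise_sym2Disjoint (hN : IsNSet G M A B C D N) : N.Pairwise Sym2Disjoint := by
  intro e he f hf hef v hve hvf
  obtain ⟨S, hS, hSU, heS⟩ := hN.1 e he
  obtain ⟨T, hT, -, hfT⟩ := hN.1 f hf
  obtain rfl : S = T := hS.eq_of_mem hT (heS v hve) (hfT v hvf)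
  obtain ⟨e1, e2, -, -, hdisj, -, -, -, hpair⟩ := hN.exists_pair hS hSU
  rcases hpair e he heS with rfl | rfl <;> rcases hpair f hf hfT with rfl | rfl
  · exact hef rfl
  · exact hdisj v hve hvf
  · exact hdisj v hvf hve
  · exact hef rfl

theorem isMatchingSet (hN : IsNSet G M A B C D N) : IsMatchingSet G N :=
  ⟨fun _ he => (hN.mem_edgeSet_and_mem_incVerts he).1, hN.pairwise_sym2Disjoint⟩

theorem exists_mem_iff (hN : IsNSet G M A B C D N) (v : V) :
    (∃ e ∈ N, v ∈ e) ↔ ∃ e ∈ A ∪ B ∪ C ∪ D, v ∈ e := by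
  constructor
  · rintro ⟨e, he, hve⟩
    obtain ⟨-, S, -, hinc⟩ := hN.mem_edgeSet_and_mem_incVerts he
    exact (hinc v hve).2
  · rintro ⟨g, hg, hvg⟩
    set S := ((G.deleteEdges M).connectedComponentMk v).supp
    have hvS : v ∈ S := rfl
    have hvinc : v ∈ incVerts S (A ∪ B ∪ C ∪ D) := ⟨hvS, g, hg, hvg⟩
    obtain ⟨e1, e2, -, -, -, hcov, h1, h2, -⟩ :=
      hN.exists_pair (isCycleOf_supp_connectedComponentMk v) ⟨v, hvinc⟩
    rcases (hcov v).2 hvinc with hv | hv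
    · exact ⟨e1, h1, hv⟩
    · exact ⟨e2, h2, hv⟩

end IsNSet

theorem stmt_7_general {V : Type*} (G : SimpleGraph V)
    (M A B C D N : Set (Sym2 V)) (hM : IsPerfectMatchingSet G M)
    (hFam : IsFFamily G M A B C D) (hN : IsNSet G M A B C D N) :
    IsPerfectMatchingSet G ((M \ (A ∪ B ∪ C ∪ D)) ∪ N) :=
  hM.diff_union hFam.union_subset hN.isMatchingSet hN.exists_mem_iff

/-- Given a bridgeless cubic graph `G`, a perfect matching `M`, an
F-family `{A, B, C, D}` for `M` and an associated edge set `N` (two disjoint covering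
edges for the four determined vertices of each incident cycle of `G∖M`), the set
`M' = (M ∖ (A ∪ B ∪ C ∪ D)) ∪ N` is a perfect matching of `G`. -/
theorem stmt_7 {V : Type*} [Fintype V] (G : SimpleGraph V)
    (hcubic : IsCubic G) (hbridgeless : Bridgeless G)
    (M A B C D N : Set (Sym2 V)) (hM : IsPerfectMatchingSet G M)
    (hFam : IsFFamily G M A B C D) (hN : IsNSet G M A B C D N) :
    IsPerfectMatchingSet G ((M \ (A ∪ B ∪ C ∪ D)) ∪ N) :=
  stmt_7_general G M A B C D N hM hFam hN
end

section
/- Let G be a cubic graph, M a perfect matching of G, and Γ an odd cycle of G∖M. Let M_X and M_Y be perfect matchings of G such that exactly one vertex x of Γ is incident with an edge of M_X ∩ M and exactly one vertex y of Γ is incident with an edge of M_Y ∩ M. If xy is an edge of Γ, then xy is the unique edge of Γ belonging to neither M_X nor M_Y. -/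
open SimpleGraph

variable {V : Type*}

/-
Off `x` and `y`, each vertex of `Γ` meets exactly one edge of `Γ` from `M_X` and exactly one
from `M_Y` (its matching edges are not in `M`). So at such a vertex, the property "lies in
exactly one of `M_X`, `M_Y`" holds for one edge of `Γ` iff it holds for the other. At `x`, the
edge of `Γ` other than `xy` lies in `M_Y` but not in `M_X`, and symmetrically at `y`. Walking
around `Γ`, every edge other than `xy` therefore lies in exactly one of `M_X`, `M_Y`, while
`xy` lies in neither.
-/

theorem SimpleGraph.ConnectedComponent.forall_mem_supp_of_adj {V : Type*} {G : SimpleGraph V}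
    {c : G.ConnectedComponent} {P : V → Prop} {x : V} (hx : x ∈ c.supp) (hPx : P x)
    (hstep : ∀ u v, v ∈ c.supp → G.Adj u v → P u → P v) :
    ∀ v ∈ c.supp, P v := by
  intro v hv
  have hxv := (reachable_iff_reflTransGen x v).mp (c.reachable_of_mem_supp hx hv)
  induction hxv with
  | refl => exact hPx
  | @tail u w hxu huw ih =>
    have hu : u ∈ c.supp := c.mem_supp_of_adj_mem_supp hv huw.symm
    exact hstep u w hv huw (ih hu)

theorem IsMatchingSet.eq_of_mem_of_mem {V : Type*} {G : SimpleGraph V} {N : Set (Sym2 V)}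
    (hN : IsMatchingSet G N) {e f : Sym2 V} {v : V} (he : e ∈ N) (hf : f ∈ N)
    (hve : v ∈ e) (hvf : v ∈ f) : e = f := by
  by_contra hne
  exact hN.2 he hf hne v hve hvf

section CubicMinusPerfectMatching

variable {V : Type*} {G : SimpleGraph V} {M N N₁ N₂ : Set (Sym2 V)} {w : V} {f g : Sym2 V}

theorem ncard_incidenceSet_deleteEdges (hcubic : IsCubic G) (hM : IsPerfectMatchingSet G M)
    (w : V) : ((G.deleteEdges M).incidenceSet w).ncard = 2 := by
  classical
  obtain ⟨m, hmM, hwm⟩ := hM.2 w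
  have hm : m ∈ G.incidenceSet w := ⟨hM.1.1 hmM, hwm⟩
  have hdel : (G.deleteEdges M).incidenceSet w = G.incidenceSet w \ {m} := by
    ext e
    simp only [incidenceSet, edgeSet_deleteEdges, Set.mem_sdiff,
      Set.mem_singleton_iff]
    refine ⟨fun ⟨⟨he, heM⟩, hwe⟩ => ⟨⟨he, hwe⟩, fun hem => heM (hem ▸ hmM)⟩,
      fun ⟨⟨he, hwe⟩, hem⟩ => ⟨⟨he, fun heM => hem (hM.1.eq_of_mem_of_mem heM hmM hwe hwm)⟩,
        hwe⟩⟩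
  have hG : (G.incidenceSet w).ncard = 3 := by
    rw [← hcubic w, Set.ncard_def, Set.ncard_def]
    exact Nat.card_congr (G.incidenceSetEquivNeighborSet w)
  rw [hdel, Set.ncard_sdiff_singleton_of_mem hm, hG]

theorem mem_iff_notMem_of_mem_incidenceSet (hcubic : IsCubic G) (hM : IsPerfectMatchingSet G M)
    (hN : IsPerfectMatchingSet G N) (hw : ∀ e ∈ N, w ∈ e → e ∉ M)
    (hf : f ∈ (G.deleteEdges M).incidenceSet w) (hg : g ∈ (G.deleteEdges M).incidenceSet w)
    (hfg : f ≠ g) : f ∈ N ↔ g ∉ N := by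
  have hpair : (G.deleteEdges M).incidenceSet w = {f, g} :=
    (Set.eq_of_subset_of_ncard_le (Set.insert_subset hf (Set.singleton_subset_iff.mpr hg))
      (by rw [ncard_incidenceSet_deleteEdges hcubic hM, Set.ncard_pair hfg])
      (Set.finite_of_ncard_ne_zero (by simp [ncard_incidenceSet_deleteEdges hcubic hM]))).symm
  obtain ⟨e, heN, hwe⟩ := hN.2 w
  have he : e ∈ (G.deleteEdges M).incidenceSet w := by
    rw [incidenceSet, edgeSet_deleteEdges]
    exact ⟨⟨hN.1.1 heN, hw e heN hwe⟩, hwe⟩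
  have hfe : f ∈ N ↔ f = e := ⟨fun hfN => hN.1.eq_of_mem_of_mem hfN heN hf.2 hwe, (· ▸ heN)⟩
  have hge : g ∈ N ↔ g = e := ⟨fun hgN => hN.1.eq_of_mem_of_mem hgN heN hg.2 hwe, (· ▸ heN)⟩
  rw [hpair] at he
  rcases he with rfl | rfl <;> grind

theorem notMem_of_mem_incidenceSet (hN : IsMatchingSet G N) (hw : ∃ e ∈ N ∩ M, w ∈ e)
    (hf : f ∈ (G.deleteEdges M).incidenceSet w) : f ∉ N := by
  obtain ⟨e, ⟨heN, heM⟩, hwe⟩ := hw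
  rw [incidenceSet, edgeSet_deleteEdges] at hf
  exact fun hfN => hf.1.2 (hN.eq_of_mem_of_mem hfN heN hf.2 hwe ▸ heM)

theorem xor_mem_of_mem_incidenceSet (hcubic : IsCubic G) (hM : IsPerfectMatchingSet G M)
    (hN₁ : IsPerfectMatchingSet G N₁) (hN₂ : IsPerfectMatchingSet G N₂)
    (hw₁ : ∀ e ∈ N₁, w ∈ e → e ∉ M) (hw₂ : ∀ e ∈ N₂, w ∈ e → e ∉ M)
    (hg : g ∈ (G.deleteEdges M).incidenceSet w) (hgxor : Xor (g ∈ N₁) (g ∈ N₂))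
    (hf : f ∈ (G.deleteEdges M).incidenceSet w) : Xor (f ∈ N₁) (f ∈ N₂) := by
  by_cases hfg : f = g
  · exact hfg ▸ hgxor
  have h₁ := mem_iff_notMem_of_mem_incidenceSet hcubic hM hN₁ hw₁ hf hg hfg
  have h₂ := mem_iff_notMem_of_mem_incidenceSet hcubic hM hN₂ hw₂ hf hg hfg
  rwa [h₁, h₂, xor_not_not]

theorem xor_mem_or_eq_of_mem_incidenceSet (hcubic : IsCubic G) (hM : IsPerfectMatchingSet G M)
    (hN₁ : IsPerfectMatchingSet G N₁) (hN₂ : IsPerfectMatchingSet G N₂)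
    (hw₁ : ∃ e ∈ N₁ ∩ M, w ∈ e) (hw₂ : ∀ e ∈ N₂, w ∈ e → e ∉ M)
    (hg : g ∈ (G.deleteEdges M).incidenceSet w) (hgN₂ : g ∉ N₂)
    (hf : f ∈ (G.deleteEdges M).incidenceSet w) : Xor (f ∈ N₁) (f ∈ N₂) ∨ f = g := by
  by_cases hfg : f = g
  · exact Or.inr hfg
  have hfN₂ : f ∈ N₂ := (mem_iff_notMem_of_mem_incidenceSet hcubic hM hN₂ hw₂ hf hg hfg).mpr hgN₂
  exact Or.inl (Or.inr ⟨hfN₂, notMem_of_mem_incidenceSet hN₁.1 hw₁ hf⟩)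

theorem forall_notMem_of_incVerts_inter_eq_singleton {S : Set V} {x : V}
    (h : incVerts S (N ∩ M) = {x}) (hw : w ∈ S) (hwx : w ≠ x) : ∀ e ∈ N, w ∈ e → e ∉ M :=
  fun e heN hwe heM => hwx <| Set.mem_singleton_iff.mp <| h ▸ ⟨hw, e, ⟨heN, heM⟩, hwe⟩

section TwoMatchings

variable {S : Set V} {x y : V}

theorem xor_mem_or_eq_of_mem_incidenceSet_left (hcubic : IsCubic G)
    (hM : IsPerfectMatchingSet G M) (hN₁ : IsPerfectMatchingSet G N₁)
    (hN₂ : IsPerfectMatchingSet G N₂) (hx : incVerts S (N₁ ∩ M) = {x})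
    (hy : incVerts S (N₂ ∩ M) = {y}) (hxy : s(x, y) ∈ (G.deleteEdges M).edgeSet)
    (hf : f ∈ (G.deleteEdges M).incidenceSet x) : Xor (f ∈ N₁) (f ∈ N₂) ∨ f = s(x, y) := by
  have hxS : x ∈ incVerts S (N₁ ∩ M) := hx ▸ rfl
  have hyS : y ∈ incVerts S (N₂ ∩ M) := hy ▸ rfl
  have hne : x ≠ y := (G.deleteEdges M).ne_of_adj hxy
  exact xor_mem_or_eq_of_mem_incidenceSet hcubic hM hN₁ hN₂ hxS.2
    (forall_notMem_of_incVerts_inter_eq_singleton hy hxS.1 hne) ⟨hxy, Sym2.mem_mk_left x y⟩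
    (notMem_of_mem_incidenceSet hN₂.1 hyS.2 ⟨hxy, Sym2.mem_mk_right x y⟩) hf

theorem forall_xor_mem_or_eq_of_mem_supp {c : (G.deleteEdges M).ConnectedComponent}
    (hcubic : IsCubic G) (hM : IsPerfectMatchingSet G M) (hN₁ : IsPerfectMatchingSet G N₁)
    (hN₂ : IsPerfectMatchingSet G N₂) (hx : incVerts c.supp (N₁ ∩ M) = {x})
    (hy : incVerts c.supp (N₂ ∩ M) = {y}) (hxy : s(x, y) ∈ (G.deleteEdges M).edgeSet) :
    ∀ w ∈ c.supp, ∀ f ∈ (G.deleteEdges M).incidenceSet w,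
      Xor (f ∈ N₁) (f ∈ N₂) ∨ f = s(x, y) := by
  have hatx : ∀ f ∈ (G.deleteEdges M).incidenceSet x, Xor (f ∈ N₁) (f ∈ N₂) ∨ f = s(x, y) :=
    fun f => xor_mem_or_eq_of_mem_incidenceSet_left hcubic hM hN₁ hN₂ hx hy hxy
  have haty : ∀ f ∈ (G.deleteEdges M).incidenceSet y, Xor (f ∈ N₁) (f ∈ N₂) ∨ f = s(x, y) :=
    fun f hf => (xor_mem_or_eq_of_mem_incidenceSet_left hcubic hM hN₂ hN₁ hy hx
      (Sym2.eq_swap ▸ hxy) hf).imp (xor_comm _ _ ▸ ·) (·.trans Sym2.eq_swap)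
  have hxS : x ∈ c.supp := (hx ▸ rfl : x ∈ incVerts c.supp (N₁ ∩ M)).1
  refine c.forall_mem_supp_of_adj hxS hatx fun u v hv huv hu f hf => ?_
  by_cases hvx : v = x
  · exact hatx f (hvx ▸ hf)
  by_cases hvy : v = y
  · exact haty f (hvy ▸ hf)
  have huvxy : s(u, v) ≠ s(x, y) := fun h => by
    rcases Sym2.mem_iff.mp (h ▸ Sym2.mem_mk_right u v) with h | h <;> contradiction
  exact Or.inl <| xor_mem_of_mem_incidenceSet hcubic hM hN₁ hN₂
    (forall_notMem_of_incVerts_inter_eq_singleton hx hv hvx)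
    (forall_notMem_of_incVerts_inter_eq_singleton hy hv hvy)
    ((mk'_mem_incidenceSet_right_iff _).mpr huv)
    ((hu _ ((mk'_mem_incidenceSet_left_iff _).mpr huv)).resolve_right huvxy) hf

end TwoMatchings

end CubicMinusPerfectMatching

theorem stmt_8_general {V : Type*} (G : SimpleGraph V)
    (hcubic : IsCubic G)
    (M : Set (Sym2 V)) (hM : IsPerfectMatchingSet G M)
    (S : Set V) (hS : IsCycleOf G M S)
    (MX MY : Set (Sym2 V))
    (hMX : IsPerfectMatchingSet G MX) (hMY : IsPerfectMatchingSet G MY)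
    (x y : V) (hx : incVerts S (MX ∩ M) = {x}) (hy : incVerts S (MY ∩ M) = {y})
    (hxy : s(x, y) ∈ cycleEdges G M S) :
    ∀ e ∈ cycleEdges G M S, (e ∉ MX ∧ e ∉ MY) ↔ e = s(x, y) := by
  obtain ⟨c, rfl⟩ := hS
  have hxyH : s(x, y) ∈ (G.deleteEdges M).edgeSet := by
    rw [edgeSet_deleteEdges]
    exact ⟨hxy.1, hxy.2.1⟩
  have hxyX : s(x, y) ∉ MX := notMem_of_mem_incidenceSet hMX.1
    (hx ▸ rfl : x ∈ incVerts c.supp (MX ∩ M)).2 ⟨hxyH, Sym2.mem_mk_left x y⟩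
  have hxyY : s(x, y) ∉ MY := notMem_of_mem_incidenceSet hMY.1
    (hy ▸ rfl : y ∈ incVerts c.supp (MY ∩ M)).2 ⟨hxyH, Sym2.mem_mk_right x y⟩
  intro e he
  refine ⟨fun ⟨heX, heY⟩ => ?_, fun h => h ▸ ⟨hxyX, hxyY⟩⟩
  induction e using Sym2.ind with
  | h a b =>
    have hab : s(a, b) ∈ (G.deleteEdges M).incidenceSet a := by
      rw [incidenceSet, edgeSet_deleteEdges]
      exact ⟨⟨he.1, he.2.1⟩, Sym2.mem_mk_left a b⟩
    exact (forall_xor_mem_or_eq_of_mem_supp hcubic hM hMX hMY hx hy hxyH a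
      (he.2.2 a (Sym2.mem_mk_left a b)) _ hab).resolve_left (by simp [heX, heY])

/-- Let `Γ` (with vertex set `S`) be an odd cycle of `G∖M`, and let
`M_X`, `M_Y` be perfect matchings such that exactly one vertex `x` of `Γ` is incident
with an edge of `M_X ∩ M` and exactly one vertex `y` of `Γ` is incident with an edge of
`M_Y ∩ M`. If `xy` is an edge of `Γ`, then `xy` is the unique edge of `Γ` belonging to
neither `M_X` nor `M_Y`. -/
theorem stmt_8 {V : Type*} [Fintype V] (G : SimpleGraph V)
    (hcubic : IsCubic G)
    (M : Set (Sym2 V)) (hM : IsPerfectMatchingSet G M)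
    (S : Set V) (hS : IsCycleOf G M S) (hodd : Odd S.ncard)
    (MX MY : Set (Sym2 V))
    (hMX : IsPerfectMatchingSet G MX) (hMY : IsPerfectMatchingSet G MY)
    (x y : V) (hx : incVerts S (MX ∩ M) = {x}) (hy : incVerts S (MY ∩ M) = {y})
    (hxy : s(x, y) ∈ cycleEdges G M S) :
    ∀ e ∈ cycleEdges G M S, (e ∉ MX ∧ e ∉ MY) ↔ e = s(x, y) :=
  stmt_8_general G hcubic M hM S hS MX MY hMX hMY x y hx hy hxy
end

section
/- Let G be a cubic graph, M a perfect matching of G, and Γ an even cycle of G∖M. Let M_X and M_Y be perfect matchings of G such that exactly two vertices x1, x2 of Γ are incident with edges of M_X ∩ M and exactly two vertices y1, y2 of Γ are incident with edges of M_Y ∩ M, where x1, x2, y1, y2 are pairwise distinct. If x1y1 and x2y2 are edges of Γ, then x1y1 and x2y2 are the only edges of Γ belonging to neither M_X nor M_Y. -/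
open SimpleGraph

variable {V : Type*}

/-!
Call an edge of `Γ` *defective* if it lies in both or in neither of `M_X`, `M_Y`. At a vertex
of `Γ` not covered by `M_X ∩ M` or `M_Y ∩ M`, the `M_X`-edge and the `M_Y`-edge are among the
two edges of `Γ` there, so a defective edge forces the other edge of `Γ` at that vertex to be
defective too. At `x₁` (and likewise at `x₂, y₁, y₂`) no edge of `Γ` lies in `M_X`, while the
`M_Y`-edge is the edge of `Γ` other than `x₁y₁`, so `x₁y₁` is the only defective edge at `x₁`.
Hence a defective edge avoiding `x₁, x₂, y₁, y₂` would spread along the connected cycle `Γ`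
until it reaches one of these four vertices, which is impossible.
-/

section

variable {G : SimpleGraph V} {M W Z : Set (Sym2 V)}

theorem eq_of_mem_of_pairwise_sym2Disjoint (hW : W.Pairwise Sym2Disjoint) {v : V}
    {f g : Sym2 V} (hf : f ∈ W) (hg : g ∈ W) (hvf : v ∈ f) (hvg : v ∈ g) : f = g := by
  by_contra h
  exact hW hf hg h v hvf hvg

theorem notMem_of_mem_inter_of_mem (hW : W.Pairwise Sym2Disjoint) {v : V} {e f : Sym2 V}
    (he : e ∈ W ∩ M) (hve : v ∈ e) (hf : f ∉ M) (hvf : v ∈ f) : f ∉ W :=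
  fun hfW => hf (eq_of_mem_of_pairwise_sym2Disjoint hW hfW he.1 hvf hve ▸ he.2)

theorem IsCubic.eq_or_eq_or_eq_of_mem_incidenceSet_diff (hG : IsCubic G)
    (hM : IsPerfectMatchingSet G M) {v : V} {f g h : Sym2 V} (hf : f ∈ G.incidenceSet v \ M)
    (hg : g ∈ G.incidenceSet v \ M) (hh : h ∈ G.incidenceSet v \ M) :
    f = g ∨ f = h ∨ g = h := by
  classical
  obtain ⟨e, heM, hve⟩ := hM.2 v
  have hcard : (G.incidenceSet v).ncard = 3 := by
    rw [← Nat.card_coe_set_eq, Nat.card_congr (G.incidenceSetEquivNeighborSet v),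
      Nat.card_coe_set_eq, hG v]
  have hfin : (G.incidenceSet v).Finite := Set.finite_of_ncard_ne_zero (by omega)
  have hlt : (G.incidenceSet v \ M).ncard < 3 :=
    hcard ▸ Set.ncard_lt_ncard ⟨Set.sdiff_subset, fun h => (h ⟨hM.1.1 heM, hve⟩).2 heM⟩ hfin
  by_contra! hne
  have := (Set.two_lt_ncard_iff hfin.sdiff).2 ⟨f, g, h, hf, hg, hh, hne⟩
  omega

theorem IsPerfectMatchingSet.mem_iff_notMem_of_mem_incidenceSet_diff
    (hW : IsPerfectMatchingSet G W) (hG : IsCubic G) (hM : IsPerfectMatchingSet G M) {v : V}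
    (hvW : ∀ e ∈ W ∩ M, v ∉ e) {f g : Sym2 V} (hf : f ∈ G.incidenceSet v \ M)
    (hg : g ∈ G.incidenceSet v \ M) (hfg : f ≠ g) : f ∈ W ↔ g ∉ W := by
  obtain ⟨e, heW, hve⟩ := hW.2 v
  have he : e ∈ G.incidenceSet v \ M := ⟨⟨hW.1.1 heW, hve⟩, fun heM => hvW e ⟨heW, heM⟩ hve⟩
  refine ⟨fun hfW hgW => hfg (eq_of_mem_of_pairwise_sym2Disjoint hW.1.2 hfW hgW hf.1.2 hg.1.2),
    fun hgW => ?_⟩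
  rcases hG.eq_or_eq_or_eq_of_mem_incidenceSet_diff hM hf hg he with h | h | h
  · exact absurd h hfg
  · exact h ▸ heW
  · exact absurd (h ▸ heW) hgW

theorem iff_of_iff_of_mem_incidenceSet_diff (hG : IsCubic G) (hM : IsPerfectMatchingSet G M)
    (hW : IsPerfectMatchingSet G W) (hZ : IsPerfectMatchingSet G Z) {v : V}
    (hvW : ∀ e ∈ W ∩ M, v ∉ e) (hvZ : ∀ e ∈ Z ∩ M, v ∉ e) {f g : Sym2 V}
    (hf : f ∈ G.incidenceSet v \ M) (hg : g ∈ G.incidenceSet v \ M) (hfg : f ≠ g)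
    (h : f ∈ W ↔ f ∈ Z) : g ∈ W ↔ g ∈ Z := by
  rwa [← not_iff_not, ← hW.mem_iff_notMem_of_mem_incidenceSet_diff hG hM hvW hf hg hfg,
    ← hZ.mem_iff_notMem_of_mem_incidenceSet_diff hG hM hvZ hf hg hfg]

theorem not_iff_of_mem_incidenceSet_diff (hG : IsCubic G) (hM : IsPerfectMatchingSet G M)
    (hW : IsPerfectMatchingSet G W) (hZ : IsPerfectMatchingSet G Z) {u w : V}
    (ha : s(u, w) ∈ G.edgeSet \ M) (hu : ∃ e ∈ W ∩ M, u ∈ e) (hvZ : ∀ e ∈ Z ∩ M, u ∉ e)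
    (hw : ∃ e ∈ Z ∩ M, w ∈ e) {f : Sym2 V} (hf : f ∈ G.incidenceSet u \ M)
    (hfa : f ≠ s(u, w)) : ¬(f ∈ W ↔ f ∈ Z) := by
  obtain ⟨e, he, hue⟩ := hu
  obtain ⟨e', he', hwe'⟩ := hw
  have haZ : s(u, w) ∉ Z :=
    notMem_of_mem_inter_of_mem hZ.1.2 he' hwe' ha.2 (Sym2.mem_mk_right u w)
  have hfZ : f ∈ Z := (hZ.mem_iff_notMem_of_mem_incidenceSet_diff hG hM hvZ hf
    ⟨⟨ha.1, Sym2.mem_mk_left u w⟩, ha.2⟩ hfa).2 haZ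
  exact fun h => notMem_of_mem_inter_of_mem hW.1.2 he hue hf.2 hf.1.2 (h.2 hfZ)

theorem SimpleGraph.Reachable.of_adj_closed {P : V → Prop} (hP : ∀ v w, G.Adj v w → P v → P w)
    {u v : V} (h : G.Reachable u v) (hu : P u) : P v := by
  rw [reachable_iff_reflTransGen] at h
  induction h with
  | refl => exact hu
  | tail _ hadj ih => exact hP _ _ hadj ih

theorem IsCycleOf.mem_of_adj {S : Set V} (hS : IsCycleOf G M S) {v w : V} (hv : v ∈ S)
    (hadj : (G.deleteEdges M).Adj v w) : w ∈ S := by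
  obtain ⟨c, rfl⟩ := hS
  exact c.mem_supp_of_adj_mem_supp hv hadj

theorem IsCycleOf.reachable {S : Set V} (hS : IsCycleOf G M S) {v w : V} (hv : v ∈ S)
    (hw : w ∈ S) : (G.deleteEdges M).Reachable v w := by
  obtain ⟨c, rfl⟩ := hS
  exact c.reachable_of_mem_supp hv hw

theorem forall_mem_of_iff_of_mem_cycleEdges (hG : IsCubic G) (hM : IsPerfectMatchingSet G M)
    {S : Set V} (hS : IsCycleOf G M S) (hW : IsPerfectMatchingSet G W)
    (hZ : IsPerfectMatchingSet G Z) {T : Set V} (hST : (S ∩ T).Nonempty)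
    (hord : ∀ v ∈ S, v ∉ T → (∀ e ∈ W ∩ M, v ∉ e) ∧ ∀ e ∈ Z ∩ M, v ∉ e)
    (hclosed : ∀ g ∈ cycleEdges G M S, (g ∈ W ↔ g ∈ Z) → ∀ v ∈ g, v ∈ T → ∀ u ∈ g, u ∈ T)
    {g : Sym2 V} (hg : g ∈ cycleEdges G M S) (hgWZ : g ∈ W ↔ g ∈ Z) : ∀ v ∈ g, v ∈ T := by
  by_contra! ⟨p, hpg, hpT⟩
  let Defective (v : V) : Prop :=
    v ∉ T ∧ ∃ g ∈ cycleEdges G M S, v ∈ g ∧ (g ∈ W ↔ g ∈ Z)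
  have hadj : ∀ v w, (G.deleteEdges M).Adj v w → Defective v → Defective w := by
    rintro v w hvw ⟨hvT, g, hg, hvg, hgWZ⟩
    have hv : v ∈ S := hg.2.2 v hvg
    have hvw' : s(v, w) ∈ cycleEdges G M S := by
      refine ⟨(deleteEdges_adj.1 hvw).1, (deleteEdges_adj.1 hvw).2, fun u hu => ?_⟩
      rcases Sym2.mem_iff.1 hu with rfl | rfl
      exacts [hv, hS.mem_of_adj hv hvw]
    have hvwWZ : s(v, w) ∈ W ↔ s(v, w) ∈ Z := by
      by_cases hgvw : g = s(v, w)
      · exact hgvw ▸ hgWZ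
      exact iff_of_iff_of_mem_incidenceSet_diff hG hM hW hZ (hord v hv hvT).1 (hord v hv hvT).2
        ⟨⟨hg.1, hvg⟩, hg.2.1⟩ ⟨⟨hvw'.1, Sym2.mem_mk_left v w⟩, hvw'.2.1⟩ hgvw hgWZ
    refine ⟨fun hwT => hvT ?_, s(v, w), hvw', Sym2.mem_mk_right v w, hvwWZ⟩
    exact hclosed _ hvw' hvwWZ w (Sym2.mem_mk_right v w) hwT v (Sym2.mem_mk_left v w)
  obtain ⟨t, htS, htT⟩ := hST
  exact ((hS.reachable (hg.2.2 p hpg) htS).of_adj_closed hadj ⟨hpT, g, hg, hpg, hgWZ⟩).1 htT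

theorem exists_mem_iff_of_incVerts_eq_pair {S : Set V} {X : Set (Sym2 V)} {a b v : V}
    (h : incVerts S X = {a, b}) (hv : v ∈ S) : (∃ e ∈ X, v ∈ e) ↔ v = a ∨ v = b := by
  simpa [incVerts, hv] using Set.ext_iff.1 h v

theorem forall_notMem_of_incVerts_eq_pair {S : Set V} {X : Set (Sym2 V)} {a b v : V}
    (h : incVerts S X = {a, b}) (hv : v ∈ S) (ha : v ≠ a) (hb : v ≠ b) : ∀ e ∈ X, v ∉ e :=
  fun e he hve => by
    rcases (exists_mem_iff_of_incVerts_eq_pair h hv).1 ⟨e, he, hve⟩ with rfl | rfl <;>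
      contradiction

theorem notMem_of_mem_incVerts_inter {S : Set V} (hW : W.Pairwise Sym2Disjoint) {v : V}
    (hv : v ∈ incVerts S (W ∩ M)) {f : Sym2 V} (hf : f ∉ M) (hvf : v ∈ f) : f ∉ W :=
  let ⟨_, _, he, hve⟩ := hv
  notMem_of_mem_inter_of_mem hW he hve hf hvf

theorem eq_or_eq_of_iff_of_mem_cycleEdges (hG : IsCubic G) (hM : IsPerfectMatchingSet G M)
    {S : Set V} {MX MY : Set (Sym2 V)}
    (hMX : IsPerfectMatchingSet G MX) (hMY : IsPerfectMatchingSet G MY) {x1 x2 y1 y2 : V}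
    (hx : incVerts S (MX ∩ M) = {x1, x2}) (hy : incVerts S (MY ∩ M) = {y1, y2})
    (hxy : x1 ≠ y1 ∧ x1 ≠ y2 ∧ x2 ≠ y1 ∧ x2 ≠ y2)
    (he1 : s(x1, y1) ∈ cycleEdges G M S) (he2 : s(x2, y2) ∈ cycleEdges G M S)
    {g : Sym2 V} (hg : g ∈ cycleEdges G M S) (hgXY : g ∈ MX ↔ g ∈ MY) {v : V} (hvg : v ∈ g)
    (hv : v ∈ ({x1, x2, y1, y2} : Set V)) : g = s(x1, y1) ∨ g = s(x2, y2) := by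
  obtain ⟨hx1y1, hx1y2, hx2y1, hx2y2⟩ := hxy
  have hvS : v ∈ S := hg.2.2 v hvg
  have hgv : g ∈ G.incidenceSet v \ M := ⟨⟨hg.1, hvg⟩, hg.2.1⟩
  have he1' : s(x1, y1) ∈ G.edgeSet \ M := ⟨he1.1, he1.2.1⟩
  have he2' : s(x2, y2) ∈ G.edgeSet \ M := ⟨he2.1, he2.2.1⟩
  have hx1 := (exists_mem_iff_of_incVerts_eq_pair hx (he1.2.2 x1 (Sym2.mem_mk_left _ _))).2
  have hx2 := (exists_mem_iff_of_incVerts_eq_pair hx (he2.2.2 x2 (Sym2.mem_mk_left _ _))).2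
  have hy1 := (exists_mem_iff_of_incVerts_eq_pair hy (he1.2.2 y1 (Sym2.mem_mk_right _ _))).2
  have hy2 := (exists_mem_iff_of_incVerts_eq_pair hy (he2.2.2 y2 (Sym2.mem_mk_right _ _))).2
  by_contra! ⟨hne1, hne2⟩
  rcases hv with rfl | rfl | rfl | rfl
  · exact not_iff_of_mem_incidenceSet_diff hG hM hMX hMY he1' (hx1 (Or.inl rfl))
      (forall_notMem_of_incVerts_eq_pair hy hvS hx1y1 hx1y2) (hy1 (Or.inl rfl)) hgv hne1 hgXY
  · exact not_iff_of_mem_incidenceSet_diff hG hM hMX hMY he2' (hx2 (Or.inr rfl))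
      (forall_notMem_of_incVerts_eq_pair hy hvS hx2y1 hx2y2) (hy2 (Or.inr rfl)) hgv hne2 hgXY
  · rw [Sym2.eq_swap] at he1' hne1
    exact not_iff_of_mem_incidenceSet_diff hG hM hMY hMX he1' (hy1 (Or.inl rfl))
      (forall_notMem_of_incVerts_eq_pair hx hvS hx1y1.symm hx2y1.symm) (hx1 (Or.inl rfl)) hgv
      hne1 hgXY.symm
  · rw [Sym2.eq_swap] at he2' hne2
    exact not_iff_of_mem_incidenceSet_diff hG hM hMY hMX he2' (hy2 (Or.inr rfl))
      (forall_notMem_of_incVerts_eq_pair hx hvS hx1y2.symm hx2y2.symm) (hx2 (Or.inr rfl)) hgv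
      hne2 hgXY.symm

end

theorem stmt_9_general {V : Type*} (G : SimpleGraph V)
    (hcubic : IsCubic G)
    (M : Set (Sym2 V)) (hM : IsPerfectMatchingSet G M)
    (S : Set V) (hS : IsCycleOf G M S)
    (MX MY : Set (Sym2 V))
    (hMX : IsPerfectMatchingSet G MX) (hMY : IsPerfectMatchingSet G MY)
    (x1 x2 y1 y2 : V)
    (hx : incVerts S (MX ∩ M) = {x1, x2}) (hy : incVerts S (MY ∩ M) = {y1, y2})
    (hd : [x1, x2, y1, y2].Pairwise (· ≠ ·))
    (he1 : s(x1, y1) ∈ cycleEdges G M S) (he2 : s(x2, y2) ∈ cycleEdges G M S) :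
    ∀ e ∈ cycleEdges G M S,
      (e ∉ MX ∧ e ∉ MY) ↔ (e = s(x1, y1) ∨ e = s(x2, y2)) := by
  have hxy : x1 ≠ y1 ∧ x1 ≠ y2 ∧ x2 ≠ y1 ∧ x2 ≠ y2 := by simp_all [List.pairwise_cons]
  have hspecial {g : Sym2 V} :=
    eq_or_eq_of_iff_of_mem_cycleEdges (g := g) hcubic hM hMX hMY hx hy hxy he1 he2
  have hord : ∀ v ∈ S, v ∉ ({x1, x2, y1, y2} : Set V) →
      (∀ e ∈ MX ∩ M, v ∉ e) ∧ ∀ e ∈ MY ∩ M, v ∉ e := by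
    intro v hv hvT
    simp only [Set.mem_insert_iff, Set.mem_singleton_iff, not_or] at hvT
    exact ⟨forall_notMem_of_incVerts_eq_pair hx hv hvT.1 hvT.2.1,
      forall_notMem_of_incVerts_eq_pair hy hv hvT.2.2.1 hvT.2.2.2⟩
  have hclosed : ∀ g ∈ cycleEdges G M S, (g ∈ MX ↔ g ∈ MY) →
      ∀ v ∈ g, v ∈ ({x1, x2, y1, y2} : Set V) → ∀ u ∈ g, u ∈ ({x1, x2, y1, y2} : Set V) := by
    intro g hg hgXY v hvg hvT u hug
    rcases hspecial hg hgXY hvg hvT with rfl | rfl <;> aesop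
  intro e he
  constructor
  · rintro ⟨heX, heY⟩
    obtain ⟨p, hp⟩ : ∃ p, p ∈ e := Sym2.ind (fun a b => ⟨a, Sym2.mem_mk_left a b⟩) e
    exact hspecial he (iff_of_false heX heY) hp (forall_mem_of_iff_of_mem_cycleEdges hcubic hM hS
      hMX hMY ⟨x1, he1.2.2 x1 (Sym2.mem_mk_left _ _), by simp⟩ hord hclosed he
      (iff_of_false heX heY) p hp)
  · rintro (rfl | rfl) <;>
    exact ⟨notMem_of_mem_incVerts_inter (S := S) hMX.1.2 (by simp [hx]) he.2.1
      (Sym2.mem_mk_left _ _),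
      notMem_of_mem_incVerts_inter (S := S) hMY.1.2 (by simp [hy]) he.2.1 (Sym2.mem_mk_right _ _)⟩

/-- Let `Γ` (with vertex set `S`) be an even cycle of `G∖M`, and let
`M_X`, `M_Y` be perfect matchings such that exactly the two vertices `x1, x2` of `Γ`
are incident with edges of `M_X ∩ M` and exactly the two vertices `y1, y2` are incident
with edges of `M_Y ∩ M`, the four vertices being pairwise distinct. If `x1y1` and
`x2y2` are edges of `Γ`, then they are the only edges of `Γ` belonging to neither
`M_X` nor `M_Y`. -/
theorem stmt_9 {V : Type*} [Fintype V] (G : SimpleGraph V)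
    (hcubic : IsCubic G)
    (M : Set (Sym2 V)) (hM : IsPerfectMatchingSet G M)
    (S : Set V) (hS : IsCycleOf G M S) (heven : Even S.ncard)
    (MX MY : Set (Sym2 V))
    (hMX : IsPerfectMatchingSet G MX) (hMY : IsPerfectMatchingSet G MY)
    (x1 x2 y1 y2 : V)
    (hx : incVerts S (MX ∩ M) = {x1, x2}) (hy : incVerts S (MY ∩ M) = {y1, y2})
    (hd : [x1, x2, y1, y2].Pairwise (· ≠ ·))
    (he1 : s(x1, y1) ∈ cycleEdges G M S) (he2 : s(x2, y2) ∈ cycleEdges G M S) :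
    ∀ e ∈ cycleEdges G M S,
      (e ∉ MX ∧ e ∉ MY) ↔ (e = s(x1, y1) ∨ e = s(x2, y2)) :=
  stmt_9_general G hcubic M hM S hS MX MY hMX hMY x1 x2 y1 y2 hx hy hd he1 he2
end

section
/- Let G be a cubic graph, M a perfect matching of G, and Γ an even cycle of G∖M. Let M_X be a perfect matching of G such that exactly four vertices x1, x2, x3, x4 of Γ are incident with edges of M_X ∩ M, where x1x2 and x3x4 are edges of Γ. Let Y be an M-balanced matching of G no edge of which is incident with a vertex of Γ. Then there exists a perfect matching M_Y of G with M_Y ∩ M = Y such that x1x2 and x3x4 are the only edges of Γ belonging to neither M_X nor M_Y. -/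
/-!
Let `M'` be a perfect matching with `M ∩ M' = Y`. Every vertex `v` of `Γ` has three edges:
its `M`-edge and two edges of `Γ`. Exactly one of the two is blocked, i.e. lies in `M_X` or
is one of `x1x2`, `x3x4`: if `v` is some `xᵢ`, the `M_X`-edge at `v` is its `M`-edge and the
blocked edge is the one of `x1x2`, `x3x4` through `v`; otherwise the `M_X`-edge at `v` lies on
`Γ` and neither `x1x2` nor `x3x4` passes through `v`. Hence the unblocked edges of `Γ` form a
perfect matching of `V(Γ)`, and since `Y` avoids `Γ`, replacing the edges of `M'` on `Γ` by
them gives `M_Y`.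
-/

open SimpleGraph

variable {V : Type*}

variable {G : SimpleGraph V}

theorem Set.ncard_sdiff_union_of_disjoint {α : Type*} {s A B : Set α} (hs : s.Finite)
    (hAB : Disjoint A B) :
    (s \ (A ∪ B)).ncard = s.ncard - (s ∩ A).ncard - (s ∩ B).ncard := by
  have hsplit := Set.ncard_inter_add_ncard_sdiff_eq_ncard s (A ∪ B) hs
  rw [Set.inter_union_distrib_left,
    Set.ncard_union_eq (hAB.mono Set.inter_subset_right Set.inter_subset_right)
      (hs.subset Set.inter_subset_left) (hs.subset Set.inter_subset_left)] at hsplit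
  omega

theorem IsMatchingSet.eq_of_mem {N : Set (Sym2 V)} (hN : IsMatchingSet G N) {e f : Sym2 V}
    (he : e ∈ N) (hf : f ∈ N) {v : V} (hve : v ∈ e) (hvf : v ∈ f) : e = f := by
  by_contra hne
  exact hN.2 he hf hne v hve hvf

theorem isPerfectMatchingSet_iff {N : Set (Sym2 V)} :
    IsPerfectMatchingSet G N ↔ N ⊆ G.edgeSet ∧ ∀ v, (G.incidenceSet v ∩ N).ncard = 1 := by
  constructor
  · rintro ⟨hmatch, hcover⟩
    refine ⟨hmatch.1, fun v => Set.ncard_eq_one.mpr ?_⟩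
    obtain ⟨e, he, hve⟩ := hcover v
    refine ⟨e, Set.eq_singleton_iff_unique_mem.mpr ⟨⟨⟨hmatch.1 he, hve⟩, he⟩, ?_⟩⟩
    rintro f ⟨⟨-, hvf⟩, hf⟩
    exact hmatch.eq_of_mem hf he hvf hve
  · rintro ⟨hsub, hone⟩
    refine ⟨⟨hsub, fun e he f hf hne v hve hvf => hne ?_⟩, fun v => ?_⟩
    · obtain ⟨a, ha⟩ := Set.ncard_eq_one.mp (hone v)
      have hev : e ∈ G.incidenceSet v ∩ N := ⟨⟨hsub he, hve⟩, he⟩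
      have hfv : f ∈ G.incidenceSet v ∩ N := ⟨⟨hsub hf, hvf⟩, hf⟩
      rw [ha] at hev hfv
      exact hev.trans hfv.symm
    · obtain ⟨e, ⟨-, hve⟩, he⟩ := Set.nonempty_of_ncard_ne_zero (hone v ▸ one_ne_zero)
      exact ⟨e, he, hve⟩

theorem IsPerfectMatchingSet.ncard_incidenceSet_inter_sdiff_add {N : Set (Sym2 V)}
    (hN : IsPerfectMatchingSet G N) (M : Set (Sym2 V)) (v : V) :
    (G.incidenceSet v ∩ (N \ M)).ncard + (G.incidenceSet v ∩ (N ∩ M)).ncard = 1 := by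
  have hone := (isPerfectMatchingSet_iff.mp hN).2 v
  rw [← Set.inter_sdiff_assoc, ← Set.inter_assoc, add_comm,
    Set.ncard_inter_add_ncard_sdiff_eq_ncard _ _ (Set.finite_of_ncard_ne_zero (by omega)), hone]

theorem IsPerfectMatchingSet.sdiff_union {N C F : Set (Sym2 V)} {S : Set V}
    (hN : IsPerfectMatchingSet G N) (hCS : ∀ e ∈ C, ∀ v ∈ e, v ∈ S)
    (hNC : ∀ v ∈ S, ∀ e ∈ N, v ∈ e → e ∈ C) (hFC : F ⊆ C) (hFG : F ⊆ G.edgeSet)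
    (hF : ∀ v ∈ S, (G.incidenceSet v ∩ F).ncard = 1) :
    IsPerfectMatchingSet G (N \ C ∪ F) := by
  obtain ⟨hNG, hNone⟩ := isPerfectMatchingSet_iff.mp hN
  refine isPerfectMatchingSet_iff.mpr
    ⟨Set.union_subset (Set.sdiff_subset.trans hNG) hFG, fun v => ?_⟩
  by_cases hv : v ∈ S
  · convert hF v hv using 2
    ext e
    simp only [Set.mem_inter_iff, Set.mem_union, Set.mem_sdiff, SimpleGraph.incidenceSet,
      Set.mem_ofPred_eq]
    have := hNC v hv e
    tauto
  · convert hNone v using 2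
    ext e
    simp only [Set.mem_inter_iff, Set.mem_union, Set.mem_sdiff, SimpleGraph.incidenceSet,
      Set.mem_ofPred_eq]
    have hC : e ∈ C → v ∉ e := fun he hve => hv (hCS e he v hve)
    have hFe := @hFC e
    tauto

theorem IsCubic.ncard_incidenceSet (hG : IsCubic G) (v : V) :
    (G.incidenceSet v).ncard = 3 := by
  classical
  exact (Set.ncard_congr' (G.incidenceSetEquivNeighborSet v)).trans (hG v)

theorem incidenceSet_inter_pair_eq {v : V} {e f : Sym2 V} (he : e ∈ G.edgeSet) (hve : v ∈ e)
    (hvf : v ∉ f) : G.incidenceSet v ∩ {e, f} = {e} := by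
  ext g
  simp only [SimpleGraph.incidenceSet, Set.mem_inter_iff, Set.mem_ofPred_eq,
    Set.mem_insert_iff, Set.mem_singleton_iff]
  constructor
  · rintro ⟨⟨-, hvg⟩, rfl | rfl⟩
    exacts [rfl, absurd hvg hvf]
  · rintro rfl
    exact ⟨⟨he, hve⟩, Or.inl rfl⟩

theorem ncard_incidenceSet_inter_pair {x1 x2 x3 x4 v : V}
    (hd : [x1, x2, x3, x4].Pairwise (· ≠ ·)) (h12 : G.Adj x1 x2) (h34 : G.Adj x3 x4)
    (hv : v ∈ ({x1, x2, x3, x4} : Set V)) :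
    (G.incidenceSet v ∩ {s(x1, x2), s(x3, x4)}).ncard = 1 := by
  simp only [List.pairwise_cons, List.mem_cons, List.not_mem_nil, forall_eq_or_imp] at hd
  obtain ⟨⟨h12', h13, h14, -⟩, ⟨h23, h24, -⟩, ⟨h34', -⟩, -⟩ := hd
  rw [← Set.ncard_singleton s(x1, x2)]
  rcases hv with rfl | rfl | rfl | rfl
  · rw [incidenceSet_inter_pair_eq h12 (Sym2.mem_mk_left _ _) (by simp [h13, h14])]
  · rw [incidenceSet_inter_pair_eq h12 (Sym2.mem_mk_right _ _) (by simp [h23, h24])]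
  · rw [Set.pair_comm, incidenceSet_inter_pair_eq h34 (Sym2.mem_mk_left _ _)
      (by simp [h13.symm, h23.symm]), Set.ncard_singleton, Set.ncard_singleton]
  · rw [Set.pair_comm, incidenceSet_inter_pair_eq h34 (Sym2.mem_mk_right _ _)
      (by simp [h14.symm, h24.symm]), Set.ncard_singleton, Set.ncard_singleton]

section CycleOf

variable {M : Set (Sym2 V)} {S : Set V}

theorem mem_cycleEdges_of_mem_incidenceSet (hS : IsCycleOf G M S) {v : V} (hv : v ∈ S)
    {e : Sym2 V} (he : e ∈ G.incidenceSet v) (heM : e ∉ M) : e ∈ cycleEdges G M S := by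
  obtain ⟨c, rfl⟩ := hS
  obtain ⟨w, rfl⟩ := Sym2.mem_iff_exists.mp he.2
  have hadj : (G.deleteEdges M).Adj v w := deleteEdges_adj.mpr ⟨he.1, heM⟩
  have hw : w ∈ c.supp := by
    rw [ConnectedComponent.mem_supp_iff] at hv ⊢
    exact (ConnectedComponent.sound hadj.reachable).symm.trans hv
  refine ⟨he.1, heM, fun x hx => ?_⟩
  rcases Sym2.mem_iff.mp hx with rfl | rfl
  exacts [hv, hw]

theorem incidenceSet_inter_cycleEdges_sdiff (hS : IsCycleOf G M S) {v : V} (hv : v ∈ S)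
    (B : Set (Sym2 V)) :
    G.incidenceSet v ∩ (cycleEdges G M S \ B) = G.incidenceSet v \ (M ∪ B) := by
  ext e
  constructor
  · rintro ⟨he, ⟨-, heM, -⟩, heB⟩
    exact ⟨he, fun h => h.elim heM heB⟩
  · rintro ⟨he, heMB⟩
    exact ⟨he, mem_cycleEdges_of_mem_incidenceSet hS hv he (fun h => heMB (Or.inl h)),
      fun h => heMB (Or.inr h)⟩

variable {MX : Set (Sym2 V)} {x1 x2 x3 x4 : V}

theorem notMem_of_mem_incVerts (hMX : IsPerfectMatchingSet G MX) {v : V}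
    (hv : v ∈ incVerts S (MX ∩ M)) {e : Sym2 V} (hve : v ∈ e) (heM : e ∉ M) : e ∉ MX := by
  obtain ⟨-, f, ⟨hfMX, hfM⟩, hvf⟩ := hv
  intro heMX
  exact heM (hMX.1.eq_of_mem heMX hfMX hve hvf ▸ hfM)

theorem disjoint_pair_of_incVerts (hMX : IsPerfectMatchingSet G MX)
    (hx : incVerts S (MX ∩ M) = {x1, x2, x3, x4})
    (he1 : s(x1, x2) ∈ cycleEdges G M S) (he2 : s(x3, x4) ∈ cycleEdges G M S) :
    Disjoint ({s(x1, x2), s(x3, x4)} : Set (Sym2 V)) MX := by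
  rw [Set.disjoint_left]
  rintro e (rfl | rfl)
  · exact notMem_of_mem_incVerts hMX (by rw [hx]; simp) (Sym2.mem_mk_left _ _) he1.2.1
  · exact notMem_of_mem_incVerts hMX (by rw [hx]; simp) (Sym2.mem_mk_left _ _) he2.2.1

theorem ncard_incidenceSet_inter_sdiff_union_pair (hMX : IsPerfectMatchingSet G MX)
    (hx : incVerts S (MX ∩ M) = {x1, x2, x3, x4}) (hd : [x1, x2, x3, x4].Pairwise (· ≠ ·))
    (he1 : s(x1, x2) ∈ cycleEdges G M S) (he2 : s(x3, x4) ∈ cycleEdges G M S)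
    {v : V} (hv : v ∈ S) :
    (G.incidenceSet v ∩ (MX \ M ∪ {s(x1, x2), s(x3, x4)})).ncard = 1 := by
  have hsum := hMX.ncard_incidenceSet_inter_sdiff_add M v
  have hfin : (G.incidenceSet v ∩ MX).Finite := Set.finite_of_ncard_ne_zero (by
    rw [(isPerfectMatchingSet_iff.mp hMX).2 v]; exact one_ne_zero)
  rw [Set.inter_union_distrib_left, Set.ncard_union_eq
    ((disjoint_pair_of_incVerts hMX hx he1 he2).symm.mono
      (Set.inter_subset_right.trans Set.sdiff_subset) Set.inter_subset_right)
    (hfin.subset (Set.inter_subset_inter_right _ Set.sdiff_subset))]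
  have hmemX : v ∈ ({x1, x2, x3, x4} : Set V) ↔ (G.incidenceSet v ∩ (MX ∩ M)).Nonempty := by
    rw [← hx]
    exact ⟨fun ⟨_, e, he, hve⟩ => ⟨e, ⟨hMX.1.1 he.1, hve⟩, he⟩,
      fun ⟨e, ⟨_, hve⟩, he⟩ => ⟨hv, e, he, hve⟩⟩
  by_cases hvx : v ∈ ({x1, x2, x3, x4} : Set V)
  · have hpos := (Set.ncard_pos (hfin.subset
      (Set.inter_subset_inter_right _ Set.inter_subset_left))).mpr (hmemX.mp hvx)
    rw [ncard_incidenceSet_inter_pair hd he1.1 he2.1 hvx]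
    omega
  · have hempty : G.incidenceSet v ∩ {s(x1, x2), s(x3, x4)} = ∅ := by
      ext e
      simp only [SimpleGraph.incidenceSet, Set.mem_inter_iff, Set.mem_ofPred_eq,
        Set.mem_insert_iff, Set.mem_singleton_iff, Set.mem_empty_iff_false, iff_false]
      rintro ⟨⟨-, hve⟩, rfl | rfl⟩ <;> rcases Sym2.mem_iff.mp hve with rfl | rfl <;> simp at hvx
    rw [Set.not_nonempty_iff_eq_empty.mp (mt hmemX.mpr hvx), Set.ncard_empty] at hsum
    rw [hempty, Set.ncard_empty]
    omega

theorem ncard_incidenceSet_inter_cycleEdges_sdiff (hcubic : IsCubic G)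
    (hM : IsPerfectMatchingSet G M) (hS : IsCycleOf G M S) (hMX : IsPerfectMatchingSet G MX)
    (hx : incVerts S (MX ∩ M) = {x1, x2, x3, x4}) (hd : [x1, x2, x3, x4].Pairwise (· ≠ ·))
    (he1 : s(x1, x2) ∈ cycleEdges G M S) (he2 : s(x3, x4) ∈ cycleEdges G M S)
    {v : V} (hv : v ∈ S) :
    (G.incidenceSet v ∩ (cycleEdges G M S \ (MX ∪ {s(x1, x2), s(x3, x4)}))).ncard = 1 := by
  set T : Set (Sym2 V) := {s(x1, x2), s(x3, x4)}
  have hMT : Disjoint M (MX \ M ∪ T) := Set.disjoint_union_right.mpr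
    ⟨Set.disjoint_sdiff_right, Set.disjoint_right.mpr (by
      rintro e (rfl | rfl)
      exacts [he1.2.1, he2.2.1])⟩
  have hB : M ∪ (MX ∪ T) = M ∪ (MX \ M ∪ T) := by
    rw [← Set.union_assoc, ← Set.union_assoc, Set.union_sdiff_self]
  rw [incidenceSet_inter_cycleEdges_sdiff hS hv, hB,
    Set.ncard_sdiff_union_of_disjoint (Set.finite_of_ncard_ne_zero (by
      rw [hcubic.ncard_incidenceSet]; simp)) hMT, hcubic.ncard_incidenceSet,
    (isPerfectMatchingSet_iff.mp hM).2 v,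
    ncard_incidenceSet_inter_sdiff_union_pair hMX hx hd he1 he2 hv]

end CycleOf

theorem stmt_11_general {V : Type*} (G : SimpleGraph V)
    (hcubic : IsCubic G)
    (M : Set (Sym2 V)) (hM : IsPerfectMatchingSet G M)
    (S : Set V) (hS : IsCycleOf G M S)
    (MX : Set (Sym2 V)) (hMX : IsPerfectMatchingSet G MX)
    (x1 x2 x3 x4 : V)
    (hx : incVerts S (MX ∩ M) = {x1, x2, x3, x4})
    (hd : [x1, x2, x3, x4].Pairwise (· ≠ ·))
    (he1 : s(x1, x2) ∈ cycleEdges G M S) (he2 : s(x3, x4) ∈ cycleEdges G M S)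
    (Y : Set (Sym2 V)) (hY : IsBalancedMatching G M Y)
    (hYS : ∀ e ∈ Y, ∀ v ∈ e, v ∉ S) :
    ∃ MY : Set (Sym2 V), IsPerfectMatchingSet G MY ∧ MY ∩ M = Y ∧
      ∀ e ∈ cycleEdges G M S,
        (e ∉ MX ∧ e ∉ MY) ↔ (e = s(x1, x2) ∨ e = s(x3, x4)) := by
  obtain ⟨M', hM', rfl⟩ := hY
  set T : Set (Sym2 V) := {s(x1, x2), s(x3, x4)}
  set C := cycleEdges G M S
  have hM'C : ∀ v ∈ S, ∀ e ∈ M', v ∈ e → e ∈ C := fun v hv e he hve =>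
    mem_cycleEdges_of_mem_incidenceSet hS hv ⟨hM'.1.1 he, hve⟩
      fun heM => hYS e ⟨heM, he⟩ v hve hv
  refine ⟨M' \ C ∪ C \ (MX ∪ T), hM'.sdiff_union (fun e he => he.2.2) hM'C Set.sdiff_subset
    (fun e he => he.1.1)
    (fun v hv => ncard_incidenceSet_inter_cycleEdges_sdiff hcubic hM hS hMX hx hd he1 he2 hv),
    ?_, ?_⟩
  · ext e
    have hCM : e ∈ C → e ∉ M := fun he => he.2.1
    simp only [Set.mem_inter_iff, Set.mem_union, Set.mem_sdiff]
    tauto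
  · intro e he
    have hTMX : e ∈ T → e ∉ MX := fun h =>
      Set.disjoint_left.mp (disjoint_pair_of_incVerts hMX hx he1 he2) h
    simp only [T, Set.mem_union, Set.mem_sdiff, Set.mem_insert_iff, Set.mem_singleton_iff]
      at hTMX ⊢
    tauto

/-- Let `Γ` (with vertex set `S`) be an even cycle of `G∖M` and let
`M_X` be a perfect matching such that exactly the four pairwise distinct vertices
`x1, x2, x3, x4` of `Γ` are incident with edges of `M_X ∩ M`, where `x1x2` and `x3x4`
are edges of `Γ`. Let `Y` be an `M`-balanced matching no edge of which is incident with
a vertex of `Γ`. Then there is a perfect matching `M_Y` with `M_Y ∩ M = Y` such that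
`x1x2` and `x3x4` are the only edges of `Γ` belonging to neither `M_X` nor `M_Y`. -/
theorem stmt_11 {V : Type*} [Fintype V] (G : SimpleGraph V)
    (hcubic : IsCubic G)
    (M : Set (Sym2 V)) (hM : IsPerfectMatchingSet G M)
    (S : Set V) (hS : IsCycleOf G M S) (heven : Even S.ncard)
    (MX : Set (Sym2 V)) (hMX : IsPerfectMatchingSet G MX)
    (x1 x2 x3 x4 : V)
    (hx : incVerts S (MX ∩ M) = {x1, x2, x3, x4})
    (hd : [x1, x2, x3, x4].Pairwise (· ≠ ·))
    (he1 : s(x1, x2) ∈ cycleEdges G M S) (he2 : s(x3, x4) ∈ cycleEdges G M S)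
    (Y : Set (Sym2 V)) (hY : IsBalancedMatching G M Y)
    (hYS : ∀ e ∈ Y, ∀ v ∈ e, v ∉ S) :
    ∃ MY : Set (Sym2 V), IsPerfectMatchingSet G MY ∧ MY ∩ M = Y ∧
      ∀ e ∈ cycleEdges G M S,
        (e ∉ MX ∧ e ∉ MY) ↔ (e = s(x1, x2) ∨ e = s(x3, x4)) :=
  stmt_11_general G hcubic M hM S hS MX hMX x1 x2 x3 x4 hx hd he1 he2 Y hY hYS
end
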